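/- Let K be a field, W a finite-dimensional K-vector space, and l a natural number with l + 1 ≤ dim_K W. Then the K-linear map ⋀^l W → Hom_K(W, ⋀^{l+1} W) sending ω to the linear map (w ↦ ω ∧ w) is injective. (This is the injectivity of the adjunction ⋀^l W → W^∨ ⊗ ⋀^{l+1} W of the wedge product, used in the proof of Lemma 2.2(2).) -/

import Mathlib

variable (K : Type*) [Field K] (W : Type*) [AddCommGroup W] [Module K W]

/-- The image of `ι` lies in the first exterior power. -/
theorem ExteriorAlgebra.ι_mem_one (w : W) : ExteriorAlgebra.ι K w ∈ ⋀[K]^1 W := by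
  rw [exteriorPower, pow_one]
  exact LinearMap.mem_range_self _ w

/-- The wedge pairing `⋀^l W × W → ⋀^(l+1) W`, `(ω, w) ↦ ω ∧ w`, as a bilinear map. -/
noncomputable def wedgeRight (l : ℕ) : ⋀[K]^l W →ₗ[K] W →ₗ[K] ⋀[K]^(l + 1) W :=
  LinearMap.mk₂ K
    (fun ω w => ⟨(ω : ExteriorAlgebra K W) * ExteriorAlgebra.ι K w,
      SetLike.mul_mem_graded ω.2 (ExteriorAlgebra.ι_mem_one K W w)⟩)
    (fun ω₁ ω₂ w => Subtype.ext (by simp [add_mul]))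
    (fun c ω w => Subtype.ext (by simp [smul_mul_assoc]))
    (fun ω w₁ w₂ => Subtype.ext (by simp [mul_add]))
    (fun c ω w => Subtype.ext (by simp [mul_smul_comm]))

/-!
If `x ∧ w = 0` for every `w`, then `x` is divisible on the right by `e₁ ∧ ⋯ ∧ eₙ` for a basis
`(eᵢ)`: when `y ∧ w = 0` for all `w` in a subspace containing `v` and `d v = 1`, the right
contraction `c = y ⌊ d` satisfies `y = c ∧ v` and `c ∧ w = 0` for all `w` there with `d w = 0`,
so the basis vectors can be split off one at a time. A multiple of an `n`-form has no component
of degree `l < n`, hence `x = 0` when it is homogeneous of degree `l`.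
-/

namespace ExteriorAlgebra

open CliffordAlgebra

variable {R M : Type*} [CommRing R] [AddCommGroup M] [Module R M]

theorem smul_eq_contractRight_mul_ι {y : ExteriorAlgebra R M} {w : M} (h : y * ι R w = 0)
    (d : Module.Dual R M) : d w • y = contractRight y d * ι R w := by
  have := contractRight_mul_ι (Q := (0 : QuadraticForm R M)) (d := d) w y
  rw [h, map_zero, LinearMap.zero_apply] at this
  exact sub_eq_zero.mp this.symm

theorem exists_mem_exteriorPower_eq_mul_of_mul_ι_eq_zero {n : ℕ} (b : Module.Basis (Fin n) R M)
    {x : ExteriorAlgebra R M} (hx : ∀ w, x * ι R w = 0) (k : ℕ) (hk : k ≤ n) :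
    ∃ y m : ExteriorAlgebra R M, m ∈ ⋀[R]^k M ∧ x = y * m ∧
      ∀ w, (∀ i : Fin n, (i : ℕ) < k → b.coord i w = 0) → y * ι R w = 0 := by
  induction k with
  | zero => exact ⟨x, 1, SetLike.one_mem_graded _, (mul_one x).symm, fun w _ => hx w⟩
  | succ k ih =>
    obtain ⟨y, m, hm, rfl, hy⟩ := ih (Nat.le_of_succ_le hk)
    let i : Fin n := ⟨k, hk⟩
    have hbi : ∀ j : Fin n, (j : ℕ) < k → b.coord j (b i) = 0 := fun j hj => by
      simp [Fin.ext_iff, i, hj.ne]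
    have hy_eq : y = contractRight y (b.coord i) * ι R (b i) := by
      simpa using smul_eq_contractRight_mul_ι (hy (b i) hbi) (b.coord i)
    refine ⟨contractRight y (b.coord i), ι R (b i) * m, ?_, by rw [← mul_assoc, ← hy_eq], ?_⟩
    · rw [exteriorPower, pow_succ']
      exact Submodule.mul_mem_mul (LinearMap.mem_range_self _ _) hm
    · intro w hw
      have hwi : b.coord i w = 0 := hw i (Nat.lt_succ_self k)
      simpa [hwi] using
        (smul_eq_contractRight_mul_ι (hy w fun j hj => hw j (hj.trans k.lt_succ_self))
          (b.coord i)).symm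

theorem eq_zero_of_mem_exteriorPower_of_eq_mul {l n : ℕ} (hln : l < n)
    {x y m : ExteriorAlgebra R M} (hx : x ∈ ⋀[R]^l M) (hm : m ∈ ⋀[R]^n M) (h : x = y * m) :
    x = 0 := by
  rw [← DirectSum.decompose_of_mem_same (fun i : ℕ => ⋀[R]^i M) hx, h]
  exact DirectSum.coe_decompose_mul_of_right_mem_of_not_le _ hm hln.not_ge

theorem eq_zero_of_mul_ι_eq_zero {n l : ℕ} (b : Module.Basis (Fin n) R M) (hln : l < n)
    {x : ExteriorAlgebra R M} (hx : x ∈ ⋀[R]^l M) (hxι : ∀ w, x * ι R w = 0) : x = 0 := by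
  obtain ⟨y, m, hm, hxy, -⟩ := exists_mem_exteriorPower_eq_mul_of_mul_ι_eq_zero b hxι n le_rfl
  exact eq_zero_of_mem_exteriorPower_of_eq_mul hln hx hm hxy

end ExteriorAlgebra

/-- The adjunction `⋀^l W → Hom_K(W, ⋀^(l+1) W)` of the wedge pairing, `ω ↦ (w ↦ ω ∧ w)`,
is injective when `W` is finite dimensional over the field `K` and `l + 1 ≤ dim_K W`. -/
theorem wedgeRight_injective [FiniteDimensional K W] (l : ℕ)
    (hl : l + 1 ≤ Module.finrank K W) :
    Function.Injective (wedgeRight K W l) := by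
  rw [injective_iff_map_eq_zero]
  intro ω hω
  have hωι : ∀ w, (ω : ExteriorAlgebra K W) * ExteriorAlgebra.ι K w = 0 := fun w =>
    congrArg Subtype.val (LinearMap.congr_fun hω w)
  exact Subtype.ext <| ExteriorAlgebra.eq_zero_of_mul_ι_eq_zero (Module.finBasis K W) hl ω.2 hωι
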